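/- arXiv:2107.01721 — 5 statements merged into one kernel-verified Lean document; each statement's English description precedes it below -/
import Mathlib

section
/- Let U = {0, 1, …, N−1}, let p₁, …, p_t be distinct primes, and define h(u) = { (i, u mod p_i) : 1 ≤ i ≤ t }. Then for every S ⊆ U, |⋃_{u ∈ S} h(u)| ≥ t·|S| − |S|²·log₂ N. -/
/-!
The sets `h u` and `h v` share a pair `(i, r)` exactly when `p i ∣ |u - v|`. The
primes `p i` are distinct, so their product over the colliding coordinates divides
`0 < |u - v| < N`; hence at most `log₂ N` coordinates collide. Adding the sets `h u` one at a
time, each new set has `t` elements and meets the union of the previous `k` sets in at most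
`k log₂ N` elements.
-/

open Finset

theorem Nat.two_pow_card_primeFactors_le {n : ℕ} (hn : n ≠ 0) : 2 ^ #n.primeFactors ≤ n :=
  calc 2 ^ #n.primeFactors ≤ ∏ q ∈ n.primeFactors, q :=
        pow_card_le_prod _ _ _ fun _ hq => (Nat.prime_of_mem_primeFactors hq).two_le
    _ ≤ n := Nat.le_of_dvd (Nat.pos_of_ne_zero hn) (Nat.prod_primeFactors_dvd n)

theorem Nat.card_primeFactors_le_log_two {n : ℕ} (hn : n ≠ 0) : #n.primeFactors ≤ Nat.log 2 n :=
  Nat.le_log_of_pow_le one_lt_two (Nat.two_pow_card_primeFactors_le hn)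

theorem Finset.le_card_biUnion_add_sq_mul {α β : Type*} [DecidableEq α] [DecidableEq β]
    (h : α → Finset β) (S : Finset α) (t c : ℕ) (ht : ∀ u ∈ S, t ≤ #(h u))
    (hc : ∀ u ∈ S, ∀ v ∈ S, u ≠ v → #(h u ∩ h v) ≤ c) :
    t * #S ≤ #(S.biUnion h) + #S ^ 2 * c := by
  induction S using Finset.induction_on with
  | empty => simp
  | @insert a T ha ih =>
    have ih := ih (fun u hu => ht u (mem_insert_of_mem hu))
      (fun u hu v hv => hc u (mem_insert_of_mem hu) v (mem_insert_of_mem hv))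
    have hta := ht a (mem_insert_self a T)
    have hinter : #(h a ∩ T.biUnion h) ≤ #T * c :=
      calc #(h a ∩ T.biUnion h) = #(T.biUnion fun v => h a ∩ h v) := by rw [inter_biUnion]
        _ ≤ ∑ v ∈ T, #(h a ∩ h v) := card_biUnion_le
        _ ≤ ∑ _v ∈ T, c := sum_le_sum fun v hv =>
            hc a (mem_insert_self a T) v (mem_insert_of_mem hv) fun hav => ha (hav ▸ hv)
        _ = #T * c := by rw [sum_const, smul_eq_mul]
    have hunion := card_union_add_card_inter (h a) (T.biUnion h)
    rw [biUnion_insert, card_insert_of_notMem ha]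
    nlinarith

section PrimeHash

variable {t : ℕ} (p : Fin t → ℕ)

def primeHash (u : ℕ) : Finset (Fin t × ℕ) :=
  univ.image fun i => (i, u % p i)

theorem card_primeHash (u : ℕ) : #(primeHash p u) = t := by
  rw [primeHash, card_image_of_injective _ fun i j hij => congrArg Prod.fst hij, card_univ,
    Fintype.card_fin]

theorem primeHash_inter (u v : ℕ) :
    primeHash p u ∩ primeHash p v =
      ({i | u % p i = v % p i} : Finset (Fin t)).image fun i => (i, u % p i) := by
  ext ⟨i, r⟩
  simp only [primeHash, mem_inter, mem_image, mem_univ, true_and, mem_filter, Prod.mk.injEq,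
    exists_eq_left]
  constructor
  · rintro ⟨hu, hv⟩
    exact ⟨i, hu.trans hv.symm, rfl, hu⟩
  · rintro ⟨_, hi, rfl, rfl⟩
    exact ⟨rfl, hi.symm⟩

theorem card_primeHash_inter_le_log_two {N : ℕ} (hp : ∀ i, (p i).Prime)
    (hinj : Function.Injective p) {u v : ℕ} (huv : u ≠ v) (hu : u < N) (hv : v < N) :
    #(primeHash p u ∩ primeHash p v) ≤ Nat.log 2 N := by
  set d := ((u : ℤ) - v).natAbs
  have hd : d ≠ 0 := by omega
  have hmaps : Set.MapsTo p {i | u % p i = v % p i} d.primeFactors := by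
    intro i hi
    have hdvd : (p i : ℤ) ∣ (u : ℤ) - v := Nat.modEq_iff_dvd.mp (Eq.symm hi)
    exact Nat.mem_primeFactors.mpr ⟨hp i, Int.natCast_dvd.mp hdvd, hd⟩
  calc #(primeHash p u ∩ primeHash p v) ≤ #({i | u % p i = v % p i} : Finset (Fin t)) := by
        rw [primeHash_inter]; exact card_image_le
    _ ≤ #d.primeFactors := card_le_card_of_injOn p (fun i hi => hmaps (by simpa using hi))
        hinj.injOn
    _ ≤ Nat.log 2 d := Nat.card_primeFactors_le_log_two hd
    _ ≤ Nat.log 2 N := Nat.log_mono_right (by omega)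

end PrimeHash

theorem stmt13_general (N t : ℕ) (p : Fin t → ℕ) (hp : ∀ i, (p i).Prime)
    (hinj : Function.Injective p) (S : Finset ℕ) (hS : ∀ u ∈ S, u < N) :
    (t : ℝ) * S.card - (S.card : ℝ) ^ 2 * Real.logb 2 N
      ≤ ((S.biUnion fun u => Finset.univ.image fun i : Fin t => (i, u % p i)).card : ℝ) := by
  have hcount : t * #S ≤ #(S.biUnion (primeHash p)) + #S ^ 2 * Nat.log 2 N :=
    le_card_biUnion_add_sq_mul _ S t _ (fun u _ => (card_primeHash p u).ge)
      fun u hu v hv huv => card_primeHash_inter_le_log_two p hp hinj huv (hS u hu) (hS v hv)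
  have hlog : (Nat.log 2 N : ℝ) ≤ Real.logb 2 N := Real.natLog_le_logb N 2
  have hcount_real : (t : ℝ) * #S ≤ #(S.biUnion (primeHash p)) + (#S : ℝ) ^ 2 * Nat.log 2 N := by
    exact_mod_cast hcount
  change _ ≤ (#(S.biUnion (primeHash p)) : ℝ)
  nlinarith [sq_nonneg (#S : ℝ)]

theorem stmt13 (N t : ℕ) (hN : 2 ≤ N) (p : Fin t → ℕ) (hp : ∀ i, (p i).Prime)
    (hinj : Function.Injective p) (S : Finset ℕ) (hS : ∀ u ∈ S, u < N) :
    (t : ℝ) * S.card - (S.card : ℝ) ^ 2 * Real.logb 2 N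
      ≤ ((S.biUnion fun u => Finset.univ.image fun i : Fin t => (i, u % p i)).card : ℝ) :=
  stmt13_general N t p hp hinj S hS
end

section
/- Let h : U → Finset U' with |h(u)| = t for all u ∈ U, and let S₁, S₂ ⊆ U be finite. Suppose for all distinct u, u' ∈ S₁ ∪ S₂ the collision bound |h(u) ∩ h(u')| ≤ C holds. Then | |h(S₁) ∩ h(S₂)| − t·|S₁ ∩ S₂| | ≤ |S₁ ∪ S₂|² · C, where h(T) = ⋃_{u ∈ T} h(u). -/
/-!
An element of `h(S₁) ∩ h(S₂)` either lies in `h(u)` for some `u ∈ S₁ ∩ S₂`, or in `h(u) ∩ h(u')`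
for two distinct `u, u' ∈ S₁ ∪ S₂`; this gives the upper bound. Conversely `h(S₁ ∩ S₂)` has
`t·|S₁ ∩ S₂|` elements up to the overlaps, which are at most `C` per pair; this gives the lower
bound.
-/

namespace Finset

variable {ι α : Type*} [DecidableEq α]

def collisions (f : ι → Finset α) (s : Finset ι) : Finset α :=
  s.offDiag.biUnion fun p => f p.1 ∩ f p.2

theorem card_collisions_le {f : ι → Finset α} {s : Finset ι} {C : ℕ}
    (hC : (s : Set ι).Pairwise fun i j => #(f i ∩ f j) ≤ C) :
    #(collisions f s) ≤ #s ^ 2 * C :=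
  calc #(collisions f s) ≤ #s.offDiag * C :=
        card_biUnion_le_card_mul _ _ _ fun p hp =>
          hC (mem_offDiag.1 hp).1 (mem_offDiag.1 hp).2.1 (mem_offDiag.1 hp).2.2
    _ ≤ #s ^ 2 * C := by
        gcongr
        rw [offDiag_card, sq]
        exact Nat.sub_le _ _

theorem biUnion_inter_biUnion_subset [DecidableEq ι] (f : ι → Finset α) (s₁ s₂ : Finset ι) :
    s₁.biUnion f ∩ s₂.biUnion f ⊆ (s₁ ∩ s₂).biUnion f ∪ collisions f (s₁ ∪ s₂) := by
  intro x hx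
  obtain ⟨⟨i, hi, hxi⟩, ⟨j, hj, hxj⟩⟩ : (∃ i ∈ s₁, x ∈ f i) ∧ ∃ j ∈ s₂, x ∈ f j := by
    simpa only [mem_inter, mem_biUnion] using hx
  obtain rfl | hij := eq_or_ne i j
  · exact mem_union_left _ (mem_biUnion.2 ⟨i, mem_inter.2 ⟨hi, hj⟩, hxi⟩)
  · refine mem_union_right _ (mem_biUnion.2 ⟨(i, j), ?_, mem_inter.2 ⟨hxi, hxj⟩⟩)
    exact mem_offDiag.2 ⟨mem_union_left _ hi, mem_union_right _ hj, hij⟩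

theorem card_inter_biUnion_le {f : ι → Finset α} {s : Finset ι} {C : ℕ} (a : Finset α)
    (hC : ∀ i ∈ s, #(a ∩ f i) ≤ C) : #(a ∩ s.biUnion f) ≤ #s * C := by
  rw [inter_biUnion]
  exact card_biUnion_le_card_mul _ _ _ hC

theorem card_mul_le_card_biUnion_add [DecidableEq ι] {f : ι → Finset α} {s : Finset ι} {t C : ℕ}
    (ht : ∀ i ∈ s, t ≤ #(f i)) (hC : (s : Set ι).Pairwise fun i j => #(f i ∩ f j) ≤ C) :
    #s * t ≤ #(s.biUnion f) + #s ^ 2 * C := by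
  induction s using Finset.induction_on with
  | empty => simp
  | @insert a s ha ih =>
    have ih := ih (fun i hi => ht i (mem_insert_of_mem hi))
      (hC.mono (by simp only [coe_insert, Set.subset_insert]))
    have hfa := ht a (mem_insert_self a s)
    have hoverlap : #(f a ∩ s.biUnion f) ≤ #s * C :=
      card_inter_biUnion_le _ fun i hi =>
        hC (by simp) (by simp [hi]) (ne_of_mem_of_not_mem hi ha).symm
    have hunion := card_union_add_card_inter (f a) (s.biUnion f)
    rw [biUnion_insert, card_insert_of_notMem ha]
    -- the new overlap `#s * C` is absorbed by `(#s + 1) ^ 2 * C - #s ^ 2 * C`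
    nlinarith

end Finset

open Finset in
theorem stmt15 {U U' : Type*} [DecidableEq U] [DecidableEq U'] (t C : ℕ)
    (h : U → Finset U') (ht : ∀ u, (h u).card = t) (S₁ S₂ : Finset U)
    (hC : ∀ u ∈ S₁ ∪ S₂, ∀ u' ∈ S₁ ∪ S₂, u ≠ u' → (h u ∩ h u').card ≤ C) :
    |((S₁.biUnion h ∩ S₂.biUnion h).card : ℤ) - t * (S₁ ∩ S₂).card|
      ≤ (S₁ ∪ S₂).card ^ 2 * C := by
  have hpair : ((S₁ ∪ S₂ : Finset U) : Set U).Pairwise fun u u' => #(h u ∩ h u') ≤ C :=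
    fun u hu u' hu' => hC u hu u' hu'
  have hIsub : S₁ ∩ S₂ ⊆ S₁ ∪ S₂ := inter_subset_union
  have hupper : #(S₁.biUnion h ∩ S₂.biUnion h) ≤ #(S₁ ∩ S₂) * t + #(S₁ ∪ S₂) ^ 2 * C :=
    calc _ ≤ #((S₁ ∩ S₂).biUnion h) + #(collisions h (S₁ ∪ S₂)) :=
          (card_le_card (biUnion_inter_biUnion_subset h S₁ S₂)).trans (card_union_le _ _)
      _ ≤ _ := add_le_add (card_biUnion_le_card_mul _ _ _ fun u _ => (ht u).le)
          (card_collisions_le hpair)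
  have hlower : #(S₁ ∩ S₂) * t ≤ #(S₁.biUnion h ∩ S₂.biUnion h) + #(S₁ ∪ S₂) ^ 2 * C :=
    calc _ ≤ #((S₁ ∩ S₂).biUnion h) + #(S₁ ∩ S₂) ^ 2 * C :=
          card_mul_le_card_biUnion_add (fun u _ => (ht u).ge) (hpair.mono (coe_subset.2 hIsub))
      _ ≤ _ := by
          gcongr
          exact subset_inter (biUnion_subset_biUnion_of_subset_left h inter_subset_left)
            (biUnion_subset_biUnion_of_subset_left h inter_subset_right)
  zify at hupper hlower
  rw [abs_sub_le_iff]
  constructor <;> linarith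
end

section
/- Let S ⊆ U be finite with |S| = s, let h : U → Finset U' with |h(u)| = t for all u, and suppose |h(S)| ≥ t·s − B where h(S) = ⋃_{u∈S} h(u). If |U'| ≥ t·s, then there exists a function h* : S → Finset U' such that |h*(u)| = t for all u ∈ S, the sets h*(u) (u ∈ S) are pairwise disjoint, and Σ_{u ∈ S} |h(u) Δ h*(u)| ≤ 2B, where Δ denotes symmetric difference. -/
/-!
First make the sets `h u`, `u ∈ S`, disjoint by shrinking: `g u ⊆ h u` with the same union, so
`∑ |g u| = |h(S)| ≥ t·s - B`. Then top each `g u` up to size `t` with fresh elements outside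
`h(S)`; there are enough of them because `|U'| ≥ t·s`. Since `h u` and `h* u` both contain `g u`
and have size `t`, `|h u Δ h* u| ≤ 2 (t - |g u|)`, and summing gives `2 (t·s - |h(S)|) ≤ 2B`.
-/

open Finset Function

section

variable {ι α : Type*} [DecidableEq ι]

theorem Set.PairwiseDisjoint.update_insert {β : Type*} [PartialOrder β] [OrderBot β]
    {s : Set ι} {f : ι → β} {i : ι} {b : β} (hf : s.PairwiseDisjoint f) (hi : i ∉ s)
    (hb : ∀ j ∈ s, Disjoint b (f j)) : (insert i s).PairwiseDisjoint (update f i b) := by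
  have hfj : ∀ j ∈ s, update f i b j = f j := fun j hj =>
    update_of_ne (ne_of_mem_of_not_mem hj hi) _ _
  refine Set.PairwiseDisjoint.insert_of_notMem (fun j hj k hk hjk => ?_) hi fun j hj => ?_
  · simpa only [onFun, hfj j hj, hfj k hk] using hf hj hk hjk
  · rw [update_self, hfj j hj]
    exact hb j hj

variable [DecidableEq α]

theorem Finset.exists_pairwiseDisjoint_subset_biUnion_eq (s : Finset ι) (f : ι → Finset α) :
    ∃ g : ι → Finset α, (s : Set ι).PairwiseDisjoint g ∧ (∀ i ∈ s, g i ⊆ f i) ∧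
      s.biUnion g = s.biUnion f := by
  induction s using Finset.induction_on with
  | empty => exact ⟨fun _ => ∅, by simp, by simp, by simp⟩
  | @insert a s ha ih =>
    obtain ⟨g, hg, hgf, hunion⟩ := ih
    have hgs : ∀ j ∈ s, update g a (f a \ s.biUnion g) j = g j := fun j hj =>
      update_of_ne (ne_of_mem_of_not_mem hj ha) _ _
    refine ⟨update g a (f a \ s.biUnion g), ?_, ?_, ?_⟩
    · rw [coe_insert]
      exact hg.update_insert ha fun j hj =>
        disjoint_sdiff_self_left.mono_right (subset_biUnion_of_mem g hj)
    · intro i hi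
      rcases mem_insert.mp hi with rfl | hi
      · rw [update_self]
        exact sdiff_subset
      · rw [hgs i hi]
        exact hgf i hi
    · rw [biUnion_insert, biUnion_insert, biUnion_congr rfl hgs, update_self,
        sdiff_union_self_eq_union, hunion]

theorem Finset.exists_pairwiseDisjoint_subset_card_eq (s : Finset ι) (n : ι → ℕ) (A : Finset α)
    (hA : ∑ i ∈ s, n i ≤ #A) :
    ∃ F : ι → Finset α, (s : Set ι).PairwiseDisjoint F ∧ ∀ i ∈ s, F i ⊆ A ∧ #(F i) = n i := by
  induction s using Finset.induction_on generalizing A with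
  | empty => exact ⟨fun _ => ∅, by simp, by simp⟩
  | @insert a s ha ih =>
    rw [sum_insert ha] at hA
    obtain ⟨X, hXA, hX⟩ := exists_subset_card_eq (le_of_add_le_left hA)
    obtain ⟨F, hF, hFA⟩ := ih (A \ X) (by rw [card_sdiff_of_subset hXA]; omega)
    refine ⟨update F a X, ?_, fun i hi => ?_⟩
    · rw [coe_insert]
      exact hF.update_insert ha fun j hj => disjoint_sdiff.mono_right (hFA j hj).1
    · rcases mem_insert.mp hi with rfl | hi
      · rw [update_self]
        exact ⟨hXA, hX⟩
      · rw [update_of_ne (ne_of_mem_of_not_mem hi ha)]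
        exact ⟨(hFA i hi).1.trans sdiff_subset, (hFA i hi).2⟩

theorem Finset.card_symmDiff_add_two_mul_card_le {a b c : Finset α} (hca : c ⊆ a) (hcb : c ⊆ b) :
    #(symmDiff a b) + 2 * #c ≤ #a + #b := by
  have hab : #(a \ b) ≤ #a - #c := by
    rw [← card_sdiff_of_subset hca]
    exact card_le_card (sdiff_subset_sdiff le_rfl hcb)
  have hba : #(b \ a) ≤ #b - #c := by
    rw [← card_sdiff_of_subset hcb]
    exact card_le_card (sdiff_subset_sdiff le_rfl hca)
  have := card_union_le (a \ b) (b \ a)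
  have := card_le_card hca
  have := card_le_card hcb
  rw [symmDiff_def, sup_eq_union]
  omega

theorem Finset.exists_pairwiseDisjoint_superset_card_eq [Fintype α] (s : Finset ι)
    (g : ι → Finset α) (t : ℕ) (hg : (s : Set ι).PairwiseDisjoint g) (hgt : ∀ i ∈ s, #(g i) ≤ t)
    (hcard : t * #s ≤ Fintype.card α) :
    ∃ k : ι → Finset α, (s : Set ι).PairwiseDisjoint k ∧ ∀ i ∈ s, g i ⊆ k i ∧ #(k i) = t := by
  have hsum : ∑ i ∈ s, (t - #(g i)) + #(s.biUnion g) = t * #s := by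
    rw [card_biUnion hg, ← sum_add_distrib,
      sum_congr rfl fun i hi => Nat.sub_add_cancel (hgt i hi), sum_const, smul_eq_mul, mul_comm]
  obtain ⟨F, hF, hFA⟩ := exists_pairwiseDisjoint_subset_card_eq s (fun i => t - #(g i))
    (univ \ s.biUnion g) (by rw [card_sdiff_of_subset (subset_univ _), card_univ]; omega)
  have hgF : ∀ i ∈ s, ∀ j ∈ s, Disjoint (g i) (F j) := fun i hi j hj =>
    (disjoint_sdiff.mono_left (subset_biUnion_of_mem g hi)).mono_right (hFA j hj).1
  refine ⟨fun i => g i ∪ F i, fun i hi j hj hij => ?_, fun i hi => ⟨subset_union_left, ?_⟩⟩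
  · exact disjoint_union_left.mpr ⟨disjoint_union_right.mpr ⟨hg hi hj hij, hgF i hi j hj⟩,
      disjoint_union_right.mpr ⟨(hgF j hj i hi).symm, hF hi hj hij⟩⟩
  · rw [card_union_of_disjoint (hgF i hi i hi), (hFA i hi).2, Nat.add_sub_cancel' (hgt i hi)]

end

theorem stmt16 {U U' : Type*} [DecidableEq U] [DecidableEq U'] [Fintype U']
    (t B s : ℕ) (h : U → Finset U') (ht : ∀ u, (h u).card = t)
    (S : Finset U) (hs : S.card = s)
    (hB : t * s ≤ (S.biUnion h).card + B)
    (hU' : t * s ≤ Fintype.card U') :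
    ∃ hstar : U → Finset U',
      (∀ u ∈ S, (hstar u).card = t) ∧
      (∀ u ∈ S, ∀ u' ∈ S, u ≠ u' → Disjoint (hstar u) (hstar u')) ∧
      ∑ u ∈ S, (symmDiff (h u) (hstar u)).card ≤ 2 * B := by
  obtain ⟨g, hg, hgh, hunion⟩ := S.exists_pairwiseDisjoint_subset_biUnion_eq h
  obtain ⟨k, hk, hgk⟩ := S.exists_pairwiseDisjoint_superset_card_eq g t hg
    (fun u hu => ht u ▸ card_le_card (hgh u hu)) (hs ▸ hU')
  refine ⟨k, fun u hu => (hgk u hu).2, fun u hu v hv huv => hk hu hv huv, ?_⟩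
  have hcost : ∑ u ∈ S, #(symmDiff (h u) (k u)) + 2 * #(S.biUnion h) ≤ 2 * (t * s) :=
    calc _ = ∑ u ∈ S, (#(symmDiff (h u) (k u)) + 2 * #(g u)) := by
          rw [← hunion, card_biUnion hg, mul_sum, sum_add_distrib]
      _ ≤ ∑ u ∈ S, (t + t) := sum_le_sum fun u hu => by
          simpa only [ht u, (hgk u hu).2] using
            card_symmDiff_add_two_mul_card_le (hgh u hu) (hgk u hu).1
      _ = 2 * (t * s) := by rw [sum_const, hs, smul_eq_mul]; ring
  omega
end

section
/- Let f : A × B → ℕ and suppose ALG, OPT ∈ ℕ satisfy: OPT = max over (a,b) of f(a,b), and ALG is attained as f(a₀,b₀) for some pair with c⁻¹·OPT ≤ ALG ≤ OPT for a real c ≥ 1. If g : A × B → ℕ satisfies g(a,b) ≥ f(a,b) for all (a,b), and the number of pairs with g(a,b) ≠ f(a,b) is at most M, then among the M+1 pairs with the largest g-values there is a pair (a,b) with f(a,b) ≥ c⁻¹ · (max f). -/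
/-! Verifying a top-(M+1) set under `g` loses nothing: some member `p` has `g p = f p` (only `M`
pairs are false positives), and for any `q` outside the set, `f q ≤ g q ≤ g p = f p`. In particular
the set contains a pair at least as good as an optimal one. -/

section TopCandidates

variable {α β : Type*} [Fintype α] [DecidableEq β] {f g : α → β} {M : ℕ}
  {T : Finset α}

theorem exists_mem_eq_of_card_filter_ne_lt
    (hT : (Finset.univ.filter fun p => g p ≠ f p).card < T.card) : ∃ p ∈ T, g p = f p := by
  obtain ⟨p, hpT, hp⟩ := Finset.not_subset.mp fun h => (Finset.card_le_card h).not_gt hT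
  exact ⟨p, hpT, by simpa using hp⟩

theorem exists_mem_le_of_top_of_card_filter_ne_le [Preorder β] (hfg : ∀ p, f p ≤ g p)
    (hM : (Finset.univ.filter fun p => g p ≠ f p).card ≤ M) (hcard : T.card = M + 1)
    (htop : ∀ p ∈ T, ∀ q ∉ T, g q ≤ g p) (q : α) : ∃ p ∈ T, f q ≤ f p := by
  by_cases hqT : q ∈ T
  · exact ⟨q, hqT, le_rfl⟩
  obtain ⟨p, hpT, hp⟩ := exists_mem_eq_of_card_filter_ne_lt (f := f) (g := g) (T := T)
    (by omega)
  exact ⟨p, hpT, (hfg q).trans <| (htop p hpT q hqT).trans hp.le⟩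

end TopCandidates

theorem stmt17_general {A B : Type*} [Fintype A] [Fintype B]
    (f g : A × B → ℕ) (c : ℝ) (hc : 1 ≤ c) (OPT : ℕ) (M : ℕ)
    (hOPTatt : ∃ p, f p = OPT)
    (hfg : ∀ p, f p ≤ g p)
    (hM : (Finset.univ.filter fun p => g p ≠ f p).card ≤ M) :
    ∀ T : Finset (A × B), T.card = M + 1 → (∀ p ∈ T, ∀ q ∉ T, g q ≤ g p) →
      ∃ p ∈ T, c⁻¹ * OPT ≤ (f p : ℝ) := by
  intro T hcard htop
  obtain ⟨q, rfl⟩ := hOPTatt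
  obtain ⟨p, hpT, hqp⟩ := exists_mem_le_of_top_of_card_filter_ne_le hfg hM hcard htop q
  refine ⟨p, hpT, ?_⟩
  calc c⁻¹ * f q ≤ f q := mul_le_of_le_one_left (Nat.cast_nonneg _) (inv_le_one_of_one_le₀ hc)
    _ ≤ f p := mod_cast hqp

theorem stmt17 {A B : Type*} [Fintype A] [Fintype B] [Nonempty A] [Nonempty B]
    (f g : A × B → ℕ) (c : ℝ) (hc : 1 ≤ c) (OPT ALG : ℕ) (M : ℕ)
    (hOPT : ∀ p, f p ≤ OPT) (hOPTatt : ∃ p, f p = OPT)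
    (hALG : ∃ p, f p = ALG)
    (hALGlo : c⁻¹ * OPT ≤ (ALG : ℝ)) (hALGhi : ALG ≤ OPT)
    (hfg : ∀ p, f p ≤ g p)
    (hM : (Finset.univ.filter fun p => g p ≠ f p).card ≤ M) :
    ∀ T : Finset (A × B), T.card = M + 1 → (∀ p ∈ T, ∀ q ∉ T, g q ≤ g p) →
      ∃ p ∈ T, c⁻¹ * OPT ≤ (f p : ℝ) :=
  stmt17_general f g c hc OPT M hOPTatt hfg hM
end

section
/- Let U be a finite set partitioned as U = ⋃_{τ ∈ {0,1}^k} U_τ, and let S₁, …, S_k ⊆ U. Define Val_τ(S₁,…,S_k) = |U_τ ∩ (⋂_{i:τ(i)=1} S_i) \ (⋃_{i:τ(i)=0} S_i)| and Val = Σ_τ Val_τ. For each τ, let S_i^τ = U_τ ∩ S_i if τ(i)=1 and S_i^τ = U_τ \ S_i if τ(i)=0, and set S_i' = ⋃_τ S_i^τ. Then Val(S₁,…,S_k) = |⋂_{i=1}^k S_i'|. -/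
/-!
A point `x` of the part `U_τ` lies in `S_i'` exactly when `x ∈ S_i ↔ τ i`, because the only
piece of `S_i'` that can contain `x` is `S_i^τ`. Hence `x ∈ ⋂ S_i'` iff the signature of `x` with
respect to `S₁, …, S_k` is `τ`, i.e. iff `x` is counted by `Val_τ`. Since the parts are disjoint
and cover `U`, summing over `τ` gives the claim.
-/

open Finset Function

namespace HybridReduction

variable {U ι : Type*} [DecidableEq U]

/-- The set `S_i'` of the reduction. -/
def signedSet [Fintype ι] [DecidableEq ι] (P : (ι → Bool) → Finset U) (S : ι → Finset U)
    (i : ι) : Finset U :=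
  univ.biUnion fun τ : ι → Bool => if τ i then P τ ∩ S i else P τ \ S i

theorem mem_signedSet_iff [Fintype ι] [DecidableEq ι] {P : (ι → Bool) → Finset U}
    {S : ι → Finset U} (hdisj : Pairwise (Disjoint on P)) {τ : ι → Bool} {x : U}
    (hx : x ∈ P τ) (i : ι) : x ∈ signedSet P S i ↔ (x ∈ S i ↔ τ i = true) := by
  have hunique : ∀ σ, x ∈ P σ → σ = τ := fun σ hσ =>
    by_contra fun hne => disjoint_left.mp (hdisj hne) hσ hx
  simp only [signedSet, mem_biUnion, mem_univ, true_and]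
  constructor
  · rintro ⟨σ, hσ⟩
    cases hσi : σ i <;> simp only [hσi, if_true, Bool.false_eq_true, if_false, mem_inter,
      mem_sdiff] at hσ <;> obtain rfl := hunique σ hσ.1 <;> simp [hσi, hσ.2]
  · intro hsig
    refine ⟨τ, ?_⟩
    cases hτi : τ i <;> simp_all

variable [Fintype U]

/-- The set counted by `Val_τ`. -/
def cell [Fintype ι] (P : (ι → Bool) → Finset U) (S : ι → Finset U) (τ : ι → Bool) :
    Finset U :=
  (P τ ∩ (univ.filter fun i => τ i = true).inf S) \ (univ.filter fun i => τ i = false).sup S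

theorem mem_cell_iff [Fintype ι] {P : (ι → Bool) → Finset U} {S : ι → Finset U}
    {τ : ι → Bool} {x : U} :
    x ∈ cell P S τ ↔ x ∈ P τ ∧ ∀ i, (x ∈ S i ↔ τ i = true) := by
  simp only [cell, mem_sdiff, mem_inter, mem_inf, mem_sup, mem_filter, mem_univ, true_and,
    not_exists, not_and]
  constructor
  · rintro ⟨⟨hxP, hin⟩, hout⟩
    refine ⟨hxP, fun i => ⟨fun hxS => ?_, hin i⟩⟩
    by_contra hτi
    exact hout i (by simpa using hτi) hxS
  · rintro ⟨hxP, hsig⟩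
    exact ⟨⟨hxP, fun i => (hsig i).2⟩, fun i hτi hxS => by simpa [hτi] using (hsig i).1 hxS⟩

variable [Fintype ι] [DecidableEq ι] {P : (ι → Bool) → Finset U}

theorem biUnion_cell_eq_inf_signedSet {S : ι → Finset U} (hdisj : Pairwise (Disjoint on P))
    (hcover : univ.biUnion P = univ) :
    univ.biUnion (cell P S) = univ.inf (signedSet P S) := by
  ext x
  obtain ⟨τ, -, hx⟩ := mem_biUnion.mp (hcover ▸ mem_univ x : x ∈ univ.biUnion P)
  simp only [mem_biUnion, mem_univ, true_and, mem_inf, forall_const,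
    mem_signedSet_iff hdisj hx, mem_cell_iff]
  constructor
  · rintro ⟨σ, hσ, hsig⟩
    obtain rfl : σ = τ := by_contra fun hne => disjoint_left.mp (hdisj hne) hσ hx
    exact hsig
  · exact fun hsig => ⟨τ, hx, hsig⟩

theorem sum_card_cell (S : ι → Finset U) (hdisj : Pairwise (Disjoint on P)) :
    ∑ τ, (cell P S τ).card = (univ.biUnion (cell P S)).card := by
  refine (card_biUnion fun τ _ σ _ hne => (hdisj hne).mono ?_ ?_).symm <;>
    exact fun x hx => (mem_cell_iff.mp hx).1

end HybridReduction

open HybridReduction in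
theorem stmt19_general {U : Type*} [Fintype U] [DecidableEq U] (k : ℕ)
    (Upart : (Fin k → Bool) → Finset U)
    (hdisj : ∀ τ τ' : Fin k → Bool, τ ≠ τ' → Disjoint (Upart τ) (Upart τ'))
    (hcover : Finset.univ.biUnion Upart = (Finset.univ : Finset U))
    (S : Fin k → Finset U) :
    ∑ τ : Fin k → Bool,
      ((Upart τ ∩ ((Finset.univ.filter fun i => τ i = true).inf S)) \
        ((Finset.univ.filter fun i => τ i = false).sup S)).card
    = (Finset.univ.inf fun i : Fin k =>
        Finset.univ.biUnion fun τ : Fin k → Bool =>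
          if τ i then Upart τ ∩ S i else Upart τ \ S i).card := by
  have hdisj' : Pairwise (Disjoint on Upart) := fun τ τ' => hdisj τ τ'
  exact (sum_card_cell S hdisj').trans
    (congrArg card (biUnion_cell_eq_inf_signedSet hdisj' hcover))

theorem stmt19 {U : Type*} [Fintype U] [DecidableEq U] (k : ℕ) (hk : 1 ≤ k)
    (Upart : (Fin k → Bool) → Finset U)
    (hdisj : ∀ τ τ' : Fin k → Bool, τ ≠ τ' → Disjoint (Upart τ) (Upart τ'))
    (hcover : Finset.univ.biUnion Upart = (Finset.univ : Finset U))
    (S : Fin k → Finset U) :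
    ∑ τ : Fin k → Bool,
      ((Upart τ ∩ ((Finset.univ.filter fun i => τ i = true).inf S)) \
        ((Finset.univ.filter fun i => τ i = false).sup S)).card
    = (Finset.univ.inf fun i : Fin k =>
        Finset.univ.biUnion fun τ : Fin k → Bool =>
          if τ i then Upart τ ∩ S i else Upart τ \ S i).card :=
  stmt19_general k Upart hdisj hcover S
end
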